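/- arXiv:math/0012038 — 8 statements merged into one kernel-verified Lean document; each statement's English description precedes it below -/
import Mathlib

section
/- Let $\sigma$ be a ring automorphism of order dividing $4$ of a ring $R$, and let $x \in R$ satisfy $x + \sigma^2(x) = 1$. Then $(1 + \sigma + \sigma^2 + \sigma^3)\big(x\,\sigma(x)\,x + x\,\sigma(x) - x^2\,\sigma(x)\big) = 1$. -/
theorem palfy_norm_one_z4 (R : Type*) [Ring R] (σ : R ≃+* R) (hσ : σ ^ 4 = 1)
    (x : R) (hx : x + (σ ^ 2) x = 1) :
    (x * σ x * x + x * σ x - x ^ 2 * σ x)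
      + σ (x * σ x * x + x * σ x - x ^ 2 * σ x)
      + (σ ^ 2) (x * σ x * x + x * σ x - x ^ 2 * σ x)
      + (σ ^ 3) (x * σ x * x + x * σ x - x ^ 2 * σ x) = 1 := by
  have h1 : (σ ^ 2) x = 1 - x := by rw [eq_sub_iff_add_eq, add_comm]; exact hx
  have h3 : σ (σ x) = 1 - x := by
    have : (σ ^ 2) x = σ (σ x) := by rw [pow_two]; rfl
    rw [← this, h1]
  have h2 : (σ ^ 2) (σ x) = 1 - σ x := by
    have : (σ ^ 2) (σ x) = σ ((σ ^ 2) x) := by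
      rw [pow_two]; show σ (σ (σ x)) = _; rfl
    rw [this, h1, map_sub, map_one]
  have h4 : (σ ^ 3) x = 1 - σ x := by
    have : (σ ^ 3) x = σ ((σ ^ 2) x) := by
      rw [pow_succ]; rfl
    rw [this, h1, map_sub, map_one]
  have h5 : (σ ^ 3) (σ x) = x := by
    have : (σ ^ 3) (σ x) = (σ ^ 4) x := by
      rw [show (4:ℕ) = 3 + 1 from rfl, pow_succ]; rfl
    rw [this, hσ]; rfl
  simp only [map_add, map_sub, map_mul, map_pow, h1, h2, h3, h4, h5]
  noncomm_ring
end

section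
/- Let $\sigma$ be a ring automorphism of order dividing $4$ of a ring $R$, and let $x \in R$ satisfy $x + \sigma^2(x) = 1$. Then $(1 + \sigma + \sigma^2 + \sigma^3)\big(\sigma(x)x - \sigma(x)x^2 + x\sigma^2(x)x + x\sigma^3(x)x - \sigma(x)\sigma^3(x)x\big) = 1$. -/
theorem norm_one_z4_main (R : Type*) [Ring R] (σ : R ≃+* R) (hσ : σ ^ 4 = 1)
    (x : R) (hx : x + (σ ^ 2) x = 1) :
    (σ x * x - σ x * x ^ 2 + x * (σ ^ 2) x * x + x * (σ ^ 3) x * x - σ x * (σ ^ 3) x * x)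
      + σ (σ x * x - σ x * x ^ 2 + x * (σ ^ 2) x * x + x * (σ ^ 3) x * x - σ x * (σ ^ 3) x * x)
      + (σ ^ 2) (σ x * x - σ x * x ^ 2 + x * (σ ^ 2) x * x + x * (σ ^ 3) x * x - σ x * (σ ^ 3) x * x)
      + (σ ^ 3) (σ x * x - σ x * x ^ 2 + x * (σ ^ 2) x * x + x * (σ ^ 3) x * x - σ x * (σ ^ 3) x * x)
      = 1 := by
  have e1 : ∀ y : R, (σ ^ 2) y = σ (σ y) := fun y => by
    rw [pow_succ, pow_one]; rfl
  have e2 : ∀ y : R, (σ ^ 3) y = σ (σ (σ y)) := fun y => by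
    rw [pow_succ]; show σ ((σ^2) y) = _; rw [e1]
  have e4 : ∀ y : R, σ (σ (σ (σ y))) = y :=  fun y => by
    calc σ (σ (σ (σ y))) = σ ((σ ^ 3) y) := by rw [e2]
      _ = (σ ^ 4) y := by rw [show (4:ℕ) = 3+1 from rfl, pow_succ]; rfl
      _ = y := by rw [hσ]; rfl
  have h2 : σ (σ x) = 1 - x := by rw [← e1]; rw [eq_sub_iff_add_eq, add_comm]; exact hx
  have h3 : σ (σ (σ x)) = 1 - σ x := by rw [h2, map_sub, map_one]
  simp only [e1, e2, map_add, map_sub, map_mul, map_one, map_pow, h2, h3, e4, map_sub, map_one]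
  noncomm_ring
end

section
/- Let $p$ be a prime, $\sigma$ a ring automorphism of order dividing $p^2$ of a ring $R$, and $x \in R$ with $\sum_{j=0}^{p-1} \sigma^{jp}(x) = 1$. Set $z = \big(\sum_{j=0}^{p-1}\sigma^j\big)(x) - 1$ and $a = x + (1-\sigma)\Big(\sum_{i=1}^{p-1}\big(\sum_{j=0}^{i-1}\sigma^{jp}\big)\big(x\,\sigma^{-ip}(z)\big)\Big)$. Then $\sum_{i=0}^{p^2-1} \sigma^i(a\,x) = 1$. -/
theorem norm_one_p_squared (R : Type*) [Ring R] (p : ℕ) (hp : p.Prime)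
    (σ : R ≃+* R) (hσ : σ ^ (p ^ 2) = 1)
    (x : R) (hx : ∑ j ∈ Finset.range p, (σ ^ (j * p)) x = 1)
    (z : R) (hz : z = (∑ j ∈ Finset.range p, (σ ^ j) x) - 1)
    (a : R) (ha : a = x +
      ((∑ i ∈ Finset.Icc 1 (p - 1), ∑ j ∈ Finset.range i, (σ ^ (j * p)) (x * (σ⁻¹ ^ (i * p)) z))
        - σ (∑ i ∈ Finset.Icc 1 (p - 1), ∑ j ∈ Finset.range i,
            (σ ^ (j * p)) (x * (σ⁻¹ ^ (i * p)) z)))) :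
    ∑ i ∈ Finset.range (p ^ 2), (σ ^ i) (a * x) = 1 := by
  classical
  have hp1 : 1 ≤ p := hp.one_lt.le
  -- application of sum of exponents
  have happ : ∀ (m n : ℕ) (c : R), (σ ^ (m + n)) c = (σ ^ m) ((σ ^ n) c) := by
    intro m n c; rw [pow_add]; rfl
  -- `T` commutes with σ-powers applied to x : for every k, ∑_j σ^{jp}(σ^k x) = 1
  have hTshift : ∀ k : ℕ, ∑ j ∈ Finset.range p, (σ ^ (j * p)) ((σ ^ k) x) = 1 := by
    intro k
    have : ∑ j ∈ Finset.range p, (σ ^ (j * p)) ((σ ^ k) x)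
        = (σ ^ k) (∑ j ∈ Finset.range p, (σ ^ (j * p)) x) := by
      rw [map_sum]
      refine Finset.sum_congr rfl fun j _ => ?_
      rw [← happ, ← happ, add_comm]
    rw [this, hx, map_one]
  -- T(z) = 0
  have hTz : ∑ j ∈ Finset.range p, (σ ^ (j * p)) z = 0 := by
    have h1 : ∀ j : ℕ, (σ ^ (j * p)) z
        = (∑ k ∈ Finset.range p, (σ ^ (j * p)) ((σ ^ k) x)) - 1 := by
      intro j
      rw [hz, map_sub, map_one, map_sum]
    calc ∑ j ∈ Finset.range p, (σ ^ (j * p)) z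
        = ∑ j ∈ Finset.range p, ((∑ k ∈ Finset.range p, (σ ^ (j * p)) ((σ ^ k) x)) - 1) := by
          exact Finset.sum_congr rfl fun j _ => h1 j
      _ = (∑ j ∈ Finset.range p, ∑ k ∈ Finset.range p, (σ ^ (j * p)) ((σ ^ k) x))
            - ∑ j ∈ Finset.range p, (1 : R) := by rw [Finset.sum_sub_distrib]
      _ = (∑ k ∈ Finset.range p, ∑ j ∈ Finset.range p, (σ ^ (j * p)) ((σ ^ k) x))
            - ∑ j ∈ Finset.range p, (1 : R) := by rw [Finset.sum_comm]
      _ = (∑ k ∈ Finset.range p, (1:R)) - ∑ j ∈ Finset.range p, (1 : R) := by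
          rw [Finset.sum_congr rfl fun k _ => hTshift k]
      _ = 0 := sub_self _
  -- σ z - z = σ^p x - x
  have hσz : σ z - z = (σ ^ p) x - x := by
    have h1 : σ z = (∑ k ∈ Finset.range p, (σ ^ (k + 1)) x) - 1 := by
      rw [hz, map_sub, map_one, map_sum]
      congr 1
      refine Finset.sum_congr rfl fun k _ => ?_
      rw [add_comm, happ, pow_one]
    rw [h1, hz]
    have h2 : ((∑ k ∈ Finset.range p, (σ ^ (k + 1)) x) - 1)
        - ((∑ k ∈ Finset.range p, (σ ^ k) x) - 1)
        = ∑ k ∈ Finset.range p, ((σ ^ (k + 1)) x - (σ ^ k) x) := by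
      rw [Finset.sum_sub_distrib]; abel
    rw [h2, Finset.sum_range_sub (fun k => (σ ^ k) x) p, pow_zero]
    rfl
  -- σ⁻¹^(i p) = σ^((p-i) p) as applied maps, for i ≤ p
  have hinvpow : ∀ i : ℕ, i ≤ p → (σ⁻¹ ^ (i * p)) = (σ ^ ((p - i) * p)) := by
    intro i hi
    rw [inv_pow]
    symm
    apply eq_inv_of_mul_eq_one_left
    rw [← pow_add]
    have : (p - i) * p + i * p = p ^ 2 := by
      rw [← add_mul, Nat.sub_add_cancel hi, pow_two]
    rw [this, hσ]
  -- useful: σ^(i p) (σ⁻¹^(i p) c) = c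
  have hinvapp : ∀ (i : ℕ) (c : R), (σ ^ (i * p)) ((σ⁻¹ ^ (i * p)) c) = c := by
    intro i c
    have : ((σ ^ (i * p)) * (σ⁻¹ ^ (i * p))) c = c := by
      rw [inv_pow, mul_inv_cancel]; rfl
    exact this
  -- Icc sums as range sums
  have hIcc : Finset.Icc 1 (p - 1) = Finset.Ico 1 p := by
    rw [← Finset.Ico_add_one_right_eq_Icc]
    congr 1
    omega
  have hIccsum : ∀ f : ℕ → R,
      ∑ i ∈ Finset.Icc 1 (p - 1), f i = ∑ i ∈ Finset.range (p - 1), f (1 + i) := by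
    intro f
    rw [hIcc, Finset.sum_Ico_eq_sum_range]
  -- splitting ∑_{i<p} off the i=0 term
  have hsplit : ∀ f : ℕ → R,
      ∑ i ∈ Finset.range p, f i = f 0 + ∑ i ∈ Finset.range (p - 1), f (1 + i) := by
    intro f
    have hpe : p = (p - 1) + 1 := (Nat.sub_add_cancel hp1).symm
    rw [hpe, Finset.sum_range_succ']
    rw [add_comm]
    congr 1
    exact Finset.sum_congr rfl fun i _ => by rw [add_comm]
  -- consequence: ∑_{i ∈ Icc 1 (p-1)} σ^{ip} c = (∑_{i<p} σ^{ip} c) - c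
  have hIccT : ∀ c : R,
      ∑ i ∈ Finset.Icc 1 (p - 1), (σ ^ (i * p)) c
        = (∑ i ∈ Finset.range p, (σ ^ (i * p)) c) - c := by
    intro c
    rw [hsplit (fun i => (σ ^ (i * p)) c)]
    simp only [Nat.zero_mul, pow_zero]
    rw [hIccsum (fun i => (σ ^ (i * p)) c)]
    have : (1 : R ≃+* R) c = c := rfl
    rw [this]; abel
  -- reflection: ∑_{i ∈ Icc 1 (p-1)} σ^{(p-i)p} z = ∑_{i ∈ Icc 1 (p-1)} σ^{ip} z
  have hreflect : ∑ i ∈ Finset.Icc 1 (p - 1), (σ ^ ((p - i) * p)) z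
      = ∑ i ∈ Finset.Icc 1 (p - 1), (σ ^ (i * p)) z := by
    rw [hIccsum (fun i => (σ ^ ((p - i) * p)) z), hIccsum (fun i => (σ ^ (i * p)) z)]
    have := Finset.sum_range_reflect (fun i => (σ ^ ((1 + i) * p)) z) (p - 1)
    rw [← this]
    refine Finset.sum_congr rfl fun j hj => ?_
    have hj' : j < p - 1 := Finset.mem_range.mp hj
    have he : p - (1 + j) = 1 + (p - 1 - 1 - j) := by omega
    rw [he]
  -- abbreviation for w
  set W : R := ∑ i ∈ Finset.Icc 1 (p - 1), ∑ j ∈ Finset.range i,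
      (σ ^ (j * p)) (x * (σ⁻¹ ^ (i * p)) z) with hW
  -- w - σ^p w = - z
  have hWτ : W - (σ ^ p) W = -z := by
    have hτW : (σ ^ p) W = ∑ i ∈ Finset.Icc 1 (p - 1), ∑ j ∈ Finset.range i,
        (σ ^ ((j + 1) * p)) (x * (σ⁻¹ ^ (i * p)) z) := by
      rw [hW, map_sum]
      refine Finset.sum_congr rfl fun i _ => ?_
      rw [map_sum]
      refine Finset.sum_congr rfl fun j _ => ?_
      rw [← happ]
      have he : p + j * p = (j + 1) * p := by ring
      rw [he]
    rw [hτW, hW, ← Finset.sum_sub_distrib]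
    have hstep : ∀ i ∈ Finset.Icc 1 (p - 1),
        (∑ j ∈ Finset.range i, (σ ^ (j * p)) (x * (σ⁻¹ ^ (i * p)) z))
          - (∑ j ∈ Finset.range i, (σ ^ ((j + 1) * p)) (x * (σ⁻¹ ^ (i * p)) z))
        = x * (σ ^ ((p - i) * p)) z - (σ ^ (i * p)) x * z := by
      intro i hi
      have hi' : 1 ≤ i ∧ i ≤ p - 1 := Finset.mem_Icc.mp hi
      rw [← Finset.sum_sub_distrib]
      have : ∀ j, (σ ^ (j * p)) (x * (σ⁻¹ ^ (i * p)) z)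
            - (σ ^ ((j + 1) * p)) (x * (σ⁻¹ ^ (i * p)) z)
          = (fun j => (σ ^ (j * p)) (x * (σ⁻¹ ^ (i * p)) z)) j
            - (fun j => (σ ^ (j * p)) (x * (σ⁻¹ ^ (i * p)) z)) (j + 1) := by
        intro j; rfl
      rw [Finset.sum_congr rfl fun j _ => this j,
        Finset.sum_range_sub' (fun j => (σ ^ (j * p)) (x * (σ⁻¹ ^ (i * p)) z)) i]
      simp only [Nat.zero_mul, pow_zero]
      have h0 : (1 : R ≃+* R) (x * (σ⁻¹ ^ (i * p)) z) = x * (σ⁻¹ ^ (i * p)) z := rfl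
      rw [h0, map_mul, hinvapp i z, hinvpow i (le_trans hi'.2 (Nat.sub_le p 1))]
    rw [Finset.sum_congr rfl hstep, Finset.sum_sub_distrib]
    have hA : ∑ i ∈ Finset.Icc 1 (p - 1), x * (σ ^ ((p - i) * p)) z = -(x * z) := by
      rw [← Finset.mul_sum, hreflect, hIccT z, hTz]
      rw [zero_sub, mul_neg]
    have hB : ∑ i ∈ Finset.Icc 1 (p - 1), (σ ^ (i * p)) x * z = (1 - x) * z := by
      rw [← Finset.sum_mul, hIccT x, hx]
    rw [hA, hB]
    rw [sub_mul, one_mul]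
    abel
  -- σ^p a = a
  have hτa : (σ ^ p) a = a := by
    have hστ : ∀ c : R, (σ ^ p) (σ c) = σ ((σ ^ p) c) := by
      intro c
      have h1 : (σ ^ p) (σ c) = (σ ^ (p + 1)) c := by
        rw [happ p 1 c, pow_one]
      have h2 : σ ((σ ^ p) c) = (σ ^ (1 + p)) c := by
        rw [happ 1 p c, pow_one]
      rw [h1, h2, add_comm]
    have key : a - (σ ^ p) a = 0 := by
      rw [ha]
      rw [map_add, map_sub]
      have e1 : x + (W - σ W) - ((σ ^ p) x + ((σ ^ p) W - (σ ^ p) (σ W)))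
          = (x - (σ ^ p) x) + ((W - (σ ^ p) W) - σ (W - (σ ^ p) W)) := by
        rw [hστ W, map_sub]
        abel
      rw [e1, hWτ]
      rw [map_neg, sub_neg_eq_add]
      have h5 : -z + σ z = (σ ^ p) x - x := by rw [neg_add_eq_sub]; exact hσz
      rw [h5]
      abel
    have := sub_eq_zero.mp key
    exact this.symm
  -- σ^{jp} a = a for all j
  have hτja : ∀ j : ℕ, (σ ^ (j * p)) a = a := by
    intro j
    induction j with
    | zero => simp only [Nat.zero_mul, pow_zero]; rfl
    | succ n ih =>
      have : (n + 1) * p = n * p + p := by ring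
      rw [this, happ, hτa, ih]
  -- S(a) = 1
  have hSa : ∑ k ∈ Finset.range p, (σ ^ k) a = 1 := by
    have hSx : ∑ k ∈ Finset.range p, (σ ^ k) x = z + 1 := by rw [hz]; abel
    have hSU : ∑ k ∈ Finset.range p, (σ ^ k) (W - σ W) = -z := by
      have : ∀ k, (σ ^ k) (W - σ W)
          = (fun k => (σ ^ k) W) k - (fun k => (σ ^ k) W) (k + 1) := by
        intro k
        have h7 : σ W = (σ ^ 1) W := by rw [pow_one]
        have h6 : (σ ^ k) (σ W) = (σ ^ (k + 1)) W := by
          rw [h7, ← happ]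
        rw [map_sub, h6]
      rw [Finset.sum_congr rfl fun k _ => this k,
        Finset.sum_range_sub' (fun k => (σ ^ k) W) p, pow_zero]
      show W - (σ ^ p) W = -z
      exact hWτ
    calc ∑ k ∈ Finset.range p, (σ ^ k) a
        = ∑ k ∈ Finset.range p, ((σ ^ k) x + (σ ^ k) (W - σ W)) := by
          refine Finset.sum_congr rfl fun k _ => ?_
          rw [ha, map_add]
      _ = (∑ k ∈ Finset.range p, (σ ^ k) x) + ∑ k ∈ Finset.range p, (σ ^ k) (W - σ W) := by
          rw [Finset.sum_add_distrib]
      _ = (z + 1) + -z := by rw [hSx, hSU]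
      _ = 1 := by abel
  -- block decomposition of range (p^2)
  have hblock : ∀ (f : ℕ → R) (J : ℕ),
      ∑ i ∈ Finset.range (J * p), f i = ∑ j ∈ Finset.range J, ∑ k ∈ Finset.range p, f (j * p + k) := by
    intro f J
    induction J with
    | zero => simp
    | succ n ih =>
      have h1 : (n + 1) * p = n * p + p := by ring
      rw [Finset.sum_range_succ, ← ih, h1]
      rw [Finset.range_eq_Ico,
        ← Finset.sum_Ico_consecutive f (Nat.zero_le (n * p)) (Nat.le_add_right (n * p) p),
        ← Finset.range_eq_Ico]
      congr 1
      rw [Finset.sum_Ico_eq_sum_range]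
      have : n * p + p - n * p = p := by omega
      rw [this]
  -- final computation
  have hpp : p ^ 2 = p * p := pow_two p
  rw [hpp, hblock (fun i => (σ ^ i) (a * x)) p]
  have hinner : ∀ j ∈ Finset.range p, ∑ k ∈ Finset.range p, (σ ^ (j * p + k)) (a * x)
      = ∑ k ∈ Finset.range p, (σ ^ k) (a * (σ ^ (j * p)) x) := by
    intro j _
    refine Finset.sum_congr rfl fun k _ => ?_
    rw [add_comm, happ, map_mul, hτja j]
  rw [Finset.sum_congr rfl hinner, Finset.sum_comm]
  have houter : ∀ k ∈ Finset.range p, ∑ j ∈ Finset.range p, (σ ^ k) (a * (σ ^ (j * p)) x)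
      = (σ ^ k) a := by
    intro k _
    rw [← map_sum, ← Finset.mul_sum, hx, mul_one]
  rw [Finset.sum_congr rfl houter, hSa]
end

section
/- Let $p$ be prime, $n \geq 2$, $1 \leq k \leq n/2$, and let $\sigma$ be a ring automorphism of order dividing $p^n$ of a ring $R$. Suppose $x \in R$ satisfies $\sum_{i=0}^{p^{n-k}-1} \sigma^{ip^k}(x) = 1$. Set $z = p^{n-2k}\big(\sum_{j=0}^{p^k-1}\sigma^j\big)(x) - 1$ and $a = p^{n-2k}x + (1-\sigma)\Big(\sum_{i=1}^{p^{n-k}-1}\big(\sum_{j=0}^{i-1}\sigma^{jp^k}\big)\big(x\,\sigma^{-ip^k}(z)\big)\Big)$. Then $\sum_{i=0}^{p^n-1} \sigma^i(a\,x) = 1$. -/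
open Finset in
private theorem norm_split {R : Type*} [Ring R] (q m : ℕ) (hq1 : 1 ≤ q) (F : ℕ → R) :
    ∑ i ∈ range (q * m), F i = ∑ j ∈ range q, ∑ i ∈ range m, F (i * q + j) := by
  have h1 : ∑ j ∈ range q, ∑ i ∈ range m, F (i * q + j)
      = ∑ ji ∈ range q ×ˢ range m, F (ji.2 * q + ji.1) := by
    rw [Finset.sum_product]
  rw [h1]
  refine Finset.sum_bij' (fun a _ => (a % q, a / q)) (fun b _ => b.2 * q + b.1)
    ?_ ?_ ?_ ?_ ?_
  · intro a ha
    rw [Finset.mem_range] at ha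
    rw [Finset.mem_product, Finset.mem_range, Finset.mem_range]
    exact ⟨Nat.mod_lt _ hq1, Nat.div_lt_of_lt_mul ha⟩
  · intro b hb
    rw [Finset.mem_product, Finset.mem_range, Finset.mem_range] at hb
    rw [Finset.mem_range]
    calc b.2 * q + b.1 < b.2 * q + q := by omega
      _ = (b.2 + 1) * q := by ring
      _ ≤ m * q := Nat.mul_le_mul_right _ (by omega)
      _ = q * m := mul_comm _ _
  · intro a _
    show a / q * q + a % q = a
    rw [mul_comm]
    exact Nat.div_add_mod a q
  · intro b hb
    rw [Finset.mem_product, Finset.mem_range, Finset.mem_range] at hb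
    show ((b.2 * q + b.1) % q, (b.2 * q + b.1) / q) = b
    have e1 : (b.2 * q + b.1) % q = b.1 := by
      rw [mul_comm, Nat.mul_add_mod]; exact Nat.mod_eq_of_lt hb.1
    have e2 : (b.2 * q + b.1) / q = b.2 := by
      rw [mul_comm, Nat.mul_add_div hq1, Nat.div_eq_of_lt hb.1, add_zero]
    rw [e1, e2]
  · intro a _
    show F a = F (a / q * q + a % q)
    congr 1
    rw [mul_comm]
    exact (Nat.div_add_mod a q).symm

open Finset in
theorem norm_one_p_power (R : Type*) [Ring R] (p n k : ℕ) (hp : p.Prime)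
    (hn : 2 ≤ n) (hk : 1 ≤ k) (hkn : 2 * k ≤ n)
    (σ : R ≃+* R) (hσ : σ ^ (p ^ n) = 1)
    (x : R) (hx : ∑ i ∈ Finset.range (p ^ (n - k)), (σ ^ (i * p ^ k)) x = 1)
    (z : R) (hz : z = (p : R) ^ (n - 2 * k) * (∑ j ∈ Finset.range (p ^ k), (σ ^ j) x) - 1)
    (a : R) (ha : a = (p : R) ^ (n - 2 * k) * x +
      ((∑ i ∈ Finset.Icc 1 (p ^ (n - k) - 1), ∑ j ∈ Finset.range i,
          (σ ^ (j * p ^ k)) (x * (σ⁻¹ ^ (i * p ^ k)) z))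
        - σ (∑ i ∈ Finset.Icc 1 (p ^ (n - k) - 1), ∑ j ∈ Finset.range i,
            (σ ^ (j * p ^ k)) (x * (σ⁻¹ ^ (i * p ^ k)) z)))) :
    ∑ i ∈ Finset.range (p ^ n), (σ ^ i) (a * x) = 1 := by
  have hppos : 0 < p := hp.pos
  set q := p ^ k with hqdef
  set m := p ^ (n - k) with hmdef
  set c : R := (p : R) ^ (n - 2 * k) with hcdef
  have hq1 : 1 ≤ q := Nat.one_le_pow _ _ hppos
  have hm1 : 1 ≤ m := Nat.one_le_pow _ _ hppos
  set τ : R ≃+* R := σ ^ q with hτdef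
  set W : R := ∑ i ∈ Icc 1 (m - 1), ∑ j ∈ range i, (σ ^ (j * q)) (x * (σ⁻¹ ^ (i * q)) z)
    with hWdef
  have hτpow : ∀ i : ℕ, τ ^ i = σ ^ (i * q) := by
    intro i; rw [hτdef, ← pow_mul, mul_comm]
  have hqm : q * m = p ^ n := by
    rw [hqdef, hmdef, ← pow_add]; congr 1; omega
  have hτm : τ ^ m = 1 := by rw [hτpow, mul_comm, hqm, hσ]
  have happ : ∀ (i j : ℕ) (y : R), (σ ^ i) ((σ ^ j) y) = (σ ^ (i + j)) y := by
    intro i j y; rw [pow_add]; rfl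
  have hτσ : ∀ (i j : ℕ) (y : R), (τ ^ i) ((σ ^ j) y) = (σ ^ j) ((τ ^ i) y) := by
    intro i j y; rw [hτpow, happ, happ, Nat.add_comm]
  have hτσ1 : ∀ (i : ℕ) (y : R), (τ ^ i) (σ y) = σ ((τ ^ i) y) := by
    intro i y
    have h := hτσ i 1 y
    simpa [pow_one] using h
  have hτapp : ∀ (i j : ℕ) (y : R), (τ ^ i) ((τ ^ j) y) = (τ ^ (i + j)) y := by
    intro i j y; rw [pow_add]; rfl
  have hτc : ∀ (i : ℕ) (u : R), (τ ^ i) (c * u) = c * (τ ^ i) u := by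
    intro i u; rw [map_mul, hcdef, map_pow, map_natCast]
  have hσc : ∀ (f : R ≃+* R) (u : R), f (c * u) = c * f u := by
    intro f u; rw [map_mul, hcdef, map_pow, map_natCast]
  -- coset decomposition
  have hcoset : ∀ y : R, ∑ i ∈ range (p ^ n), (σ ^ i) y
      = ∑ j ∈ range q, (σ ^ j) (∑ i ∈ range m, (τ ^ i) y) := by
    intro y
    rw [← hqm, norm_split q m hq1 (fun i => (σ ^ i) y)]
    refine Finset.sum_congr rfl fun j _ => ?_
    rw [map_sum]
    refine Finset.sum_congr rfl fun i _ => ?_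
    rw [hτpow, happ, Nat.add_comm]
  -- hx in τ form
  have hxτ : ∑ i ∈ range m, (τ ^ i) x = 1 := by
    rw [← hx]
    exact Finset.sum_congr rfl fun i _ => by rw [hτpow]
  -- trace of z vanishes
  have htz : ∑ i ∈ range m, (τ ^ i) z = 0 := by
    have h1 : ∀ i : ℕ, (τ ^ i) z
        = c * (∑ j ∈ range q, (σ ^ j) ((τ ^ i) x)) - 1 := by
      intro i
      rw [hz, map_sub, map_one, hσc, map_sum]
      congr 2
      exact Finset.sum_congr rfl fun j _ => hτσ i j x
    calc ∑ i ∈ range m, (τ ^ i) z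
        = ∑ i ∈ range m, (c * (∑ j ∈ range q, (σ ^ j) ((τ ^ i) x)) - 1) :=
          Finset.sum_congr rfl fun i _ => h1 i
      _ = c * (∑ j ∈ range q, (σ ^ j) (∑ i ∈ range m, (τ ^ i) x)) - (m : R) := by
          rw [Finset.sum_sub_distrib, ← Finset.mul_sum, Finset.sum_const,
            Finset.card_range, nsmul_eq_mul, mul_one, Finset.sum_comm]
          congr 2
          exact Finset.sum_congr rfl fun j _ => (map_sum _ _ _).symm
      _ = c * (q : R) - (m : R) := by
          rw [hxτ]
          congr 2
          simp
      _ = 0 := by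
          rw [hcdef, hqdef, hmdef]
          push_cast
          rw [← pow_add, show n - 2 * k + k = n - k by omega]
          exact sub_self _
  -- the key telescoping identity : τ W = W + z
  have hIcc : Icc 1 (m - 1) = Ico 1 m := by
    rw [← Finset.Ico_add_one_right_eq_Icc]; congr 1; omega
  have htail : ∀ y : R, ∑ i ∈ Icc 1 (m - 1), (τ ^ i) y
      = (∑ i ∈ range m, (τ ^ i) y) - y := by
    intro y
    rw [hIcc, Finset.range_eq_Ico, Finset.sum_eq_sum_Ico_succ_bot (by omega : 0 < m)]
    have h0 : ((τ : R ≃+* R) ^ 0) y = y := rfl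
    rw [h0, show (0:ℕ) + 1 = 1 from rfl, add_sub_cancel_left]
  have hinv : ∀ i : ℕ, (τ ^ i) ((σ⁻¹ ^ (i * q)) z) = z := by
    intro i
    rw [hτpow, inv_pow]
    have h : σ ^ (i * q) * (σ ^ (i * q))⁻¹ = 1 := mul_inv_cancel _
    calc (σ ^ (i*q)) ((σ ^ (i*q))⁻¹ z) = (σ ^ (i*q) * (σ ^ (i*q))⁻¹) z := rfl
      _ = z := by rw [h]; rfl
  have hneg : ∀ i ∈ Icc 1 (m - 1), (σ⁻¹ ^ (i * q)) z = (τ ^ (m - i)) z := by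
    intro i hi
    rw [Finset.mem_Icc] at hi
    have h2 : τ ^ (m - i) * τ ^ i = 1 := by
      rw [← pow_add, Nat.sub_add_cancel (by omega), hτm]
    have h3 : τ ^ (m - i) = σ⁻¹ ^ (i * q) := by
      rw [inv_pow, ← hτpow i]; exact eq_inv_of_mul_eq_one_left h2
    rw [h3]
  have hτW : τ W = W + z := by
    have key : τ W - W = z := by
      rw [hWdef, map_sum, ← Finset.sum_sub_distrib]
      have inner : ∀ i ∈ Icc 1 (m - 1),
          τ (∑ j ∈ range i, (σ ^ (j * q)) (x * (σ⁻¹ ^ (i * q)) z))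
            - ∑ j ∈ range i, (σ ^ (j * q)) (x * (σ⁻¹ ^ (i * q)) z)
          = (τ ^ i) x * z - x * (τ ^ (m - i)) z := by
        intro i hi
        rw [map_sum, ← Finset.sum_sub_distrib]
        have e : ∀ j ∈ range i,
            τ ((σ ^ (j * q)) (x * (σ⁻¹ ^ (i * q)) z)) - (σ ^ (j * q)) (x * (σ⁻¹ ^ (i * q)) z)
            = (τ ^ (j+1)) (x * (σ⁻¹ ^ (i * q)) z) - (τ ^ j) (x * (σ⁻¹ ^ (i * q)) z) := by
          intro j _
          rw [← hτpow j]
          congr 1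
          calc τ ((τ ^ j) (x * (σ⁻¹ ^ (i * q)) z)) = (τ ^ 1) ((τ ^ j) _) := by rw [pow_one]
            _ = (τ ^ (j + 1)) _ := by rw [hτapp, Nat.add_comm]
        rw [Finset.sum_congr rfl e,
          Finset.sum_range_sub (fun j => (τ ^ j) (x * (σ⁻¹ ^ (i * q)) z))]
        have hA : (τ ^ i) (x * (σ⁻¹ ^ (i * q)) z) = (τ ^ i) x * z := by
          rw [map_mul, hinv i]
        have hB : ((τ : R ≃+* R) ^ 0) (x * (σ⁻¹ ^ (i * q)) z) = x * (τ ^ (m - i)) z := by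
          rw [pow_zero, hneg i hi]; rfl
        rw [hA, hB]
      rw [Finset.sum_congr rfl inner, Finset.sum_sub_distrib]
      have hs1 : ∑ i ∈ Icc 1 (m - 1), (τ ^ i) x * z = (1 - x) * z := by
        rw [← Finset.sum_mul, htail x, hxτ]
      have hs2 : ∑ i ∈ Icc 1 (m - 1), x * (τ ^ (m - i)) z = x * (0 - z) := by
        rw [← Finset.mul_sum]
        congr 1
        rw [← htz, ← htail z]
        refine Finset.sum_nbij' (fun i => m - i) (fun i => m - i) ?_ ?_ ?_ ?_ ?_
        · intro i hi; rw [Finset.mem_Icc] at *; omega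
        · intro i hi; rw [Finset.mem_Icc] at *; omega
        · intro i hi; rw [Finset.mem_Icc] at hi; omega
        · intro i hi; rw [Finset.mem_Icc] at hi; omega
        · intro i hi; rfl
      rw [hs1, hs2, sub_mul, one_mul, zero_sub, mul_neg, sub_neg_eq_add, sub_add_cancel]
    exact sub_eq_iff_eq_add'.mp key
  -- iterate: τ^i W = W + partial sums of z
  have hWi : ∀ i : ℕ, (τ ^ i) W = W + ∑ l ∈ range i, (τ ^ l) z := by
    intro i
    induction i with
    | zero =>
      rw [pow_zero, Finset.range_zero, Finset.sum_empty, add_zero]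
      rfl
    | succ i ih =>
      have hstep : (τ ^ (i+1)) W = (τ ^ i) (τ W) := by
        rw [pow_succ]; rfl
      rw [hstep, hτW, map_add, ih, Finset.sum_range_succ, add_assoc]
  -- trace of W * x and (σ W) * x over the subgroup
  have htWx : ∑ i ∈ range m, (τ ^ i) (W * x)
      = W + ∑ i ∈ range m, (∑ l ∈ range i, (τ ^ l) z) * (τ ^ i) x := by
    have e : ∀ i ∈ range m, (τ ^ i) (W * x)
        = W * (τ ^ i) x + (∑ l ∈ range i, (τ ^ l) z) * (τ ^ i) x := by
      intro i _; rw [map_mul, hWi i, add_mul]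
    rw [Finset.sum_congr rfl e, Finset.sum_add_distrib, ← Finset.mul_sum, hxτ, mul_one]
  have htσWx : ∑ i ∈ range m, (τ ^ i) (σ W * x)
      = σ W + ∑ i ∈ range m, σ (∑ l ∈ range i, (τ ^ l) z) * (τ ^ i) x := by
    have e : ∀ i ∈ range m, (τ ^ i) (σ W * x)
        = σ W * (τ ^ i) x + σ (∑ l ∈ range i, (τ ^ l) z) * (τ ^ i) x := by
      intro i _
      rw [map_mul, hτσ1 i W, hWi i, map_add, add_mul]
    rw [Finset.sum_congr rfl e, Finset.sum_add_distrib, ← Finset.mul_sum, hxτ, mul_one]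
  -- z - σ z
  have hshiftgen : ∀ y : R, σ (∑ j ∈ range q, (σ ^ j) y)
      = (∑ j ∈ range q, (σ ^ j) y) - y + (σ ^ q) y := by
    intro y
    rw [map_sum]
    have e : ∀ j ∈ range q, σ ((σ ^ j) y) = (σ ^ (j+1)) y := by
      intro j _
      calc σ ((σ ^ j) y) = (σ ^ 1) ((σ ^ j) y) := by rw [pow_one]
        _ = (σ ^ (j+1)) y := by rw [happ, Nat.add_comm]
    rw [Finset.sum_congr rfl e]
    have h2 := Finset.sum_range_succ' (fun j => (σ ^ j) y) q
    have h3 := Finset.sum_range_succ (fun j => (σ ^ j) y) q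
    have h4 : ∑ j ∈ range q, (σ ^ (j+1)) y = (∑ j ∈ range (q+1), (σ ^ j) y) - (σ ^ 0) y := by
      rw [h2]; exact (add_sub_cancel_right _ _).symm
    rw [h4, h3]
    have h0 : ((σ : R ≃+* R) ^ 0) y = y := rfl
    rw [h0]
    abel
  have hzσ : z - σ z = c * (x - τ x) := by
    rw [hz, map_sub, map_one, hσc, hshiftgen x]
    have h6 : τ x = (σ ^ q) x := by rw [hτdef]
    rw [h6]
    noncomm_ring
  -- partial sums of z minus their σ-image
  have hsi : ∀ i : ℕ, (∑ l ∈ range i, (τ ^ l) z) - σ (∑ l ∈ range i, (τ ^ l) z)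
      = c * x - c * ((τ ^ i) x) := by
    intro i
    rw [map_sum, ← Finset.sum_sub_distrib]
    have e : ∀ l ∈ range i, (τ ^ l) z - σ ((τ ^ l) z)
        = c * ((τ ^ l) x) - c * ((τ ^ (l+1)) x) := by
      intro l _
      rw [← hτσ1 l z, ← map_sub, hzσ, hτc, map_sub, mul_sub]
      congr 2
    rw [Finset.sum_congr rfl e, Finset.sum_range_sub' (fun l => c * ((τ ^ l) x))]
    have h0 : ((τ : R ≃+* R) ^ 0) x = x := rfl
    rw [h0]
  -- P - P'
  have hPP' : (∑ i ∈ range m, (∑ l ∈ range i, (τ ^ l) z) * (τ ^ i) x)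
      - (∑ i ∈ range m, σ (∑ l ∈ range i, (τ ^ l) z) * (τ ^ i) x)
      = c * x - c * (∑ i ∈ range m, (τ ^ i) (x * x)) := by
    rw [← Finset.sum_sub_distrib]
    have e : ∀ i ∈ range m, (∑ l ∈ range i, (τ ^ l) z) * (τ ^ i) x
        - σ (∑ l ∈ range i, (τ ^ l) z) * (τ ^ i) x
        = c * (x * (τ ^ i) x) - c * ((τ ^ i) (x * x)) := by
      intro i _
      rw [← sub_mul, hsi i, map_mul]
      noncomm_ring
    rw [Finset.sum_congr rfl e, Finset.sum_sub_distrib, ← Finset.mul_sum, ← Finset.mul_sum,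
      ← Finset.mul_sum, hxτ, mul_one]
  -- shift sum of σ^j W
  have hσshift : ∑ j ∈ range q, (σ ^ j) (σ W) = (∑ j ∈ range q, (σ ^ j) W) + z := by
    have e : ∀ j ∈ range q, (σ ^ j) (σ W) = (σ ^ (j+1)) W := by
      intro j _
      calc (σ ^ j) (σ W) = (σ ^ j) ((σ ^ 1) W) := by rw [pow_one]
        _ = (σ ^ (j+1)) W := happ j 1 W
    rw [Finset.sum_congr rfl e]
    have h2 := Finset.sum_range_succ' (fun j => (σ ^ j) W) q
    have h3 := Finset.sum_range_succ (fun j => (σ ^ j) W) q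
    have h4 : ∑ j ∈ range q, (σ ^ (j+1)) W = (∑ j ∈ range (q+1), (σ ^ j) W) - (σ ^ 0) W := by
      rw [h2]; exact (add_sub_cancel_right _ _).symm
    have h5 : ((σ : R ≃+* R) ^ q) W = W + z := by
      rw [← hτdef]; exact hτW
    have h0 : ((σ : R ≃+* R) ^ 0) W = W := rfl
    rw [h4, h3, h5, h0]
    abel
  -- assemble
  have hax : a * x = c * (x * x) + ((W * x) - (σ W * x)) := by
    rw [ha]
    noncomm_ring
  have hNsplit : ∑ i ∈ range (p ^ n), (σ ^ i) (a * x)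
      = c * (∑ i ∈ range (p ^ n), (σ ^ i) (x * x))
        + ((∑ i ∈ range (p ^ n), (σ ^ i) (W * x))
          - (∑ i ∈ range (p ^ n), (σ ^ i) (σ W * x))) := by
    have e : ∀ i ∈ range (p ^ n), (σ ^ i) (a * x)
        = c * ((σ ^ i) (x * x)) + ((σ ^ i) (W * x) - (σ ^ i) (σ W * x)) := by
      intro i _
      rw [hax, map_add, map_sub, hσc]
    rw [Finset.sum_congr rfl e, Finset.sum_add_distrib, Finset.sum_sub_distrib,
      ← Finset.mul_sum]
  have hNWx : ∑ i ∈ range (p ^ n), (σ ^ i) (W * x)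
      = (∑ j ∈ range q, (σ ^ j) W)
        + ∑ j ∈ range q, (σ ^ j) (∑ i ∈ range m, (∑ l ∈ range i, (τ ^ l) z) * (τ ^ i) x) := by
    rw [hcoset (W * x), htWx]
    have e : ∀ j ∈ range q, (σ ^ j) (W + ∑ i ∈ range m, (∑ l ∈ range i, (τ ^ l) z) * (τ ^ i) x)
        = (σ ^ j) W + (σ ^ j) (∑ i ∈ range m, (∑ l ∈ range i, (τ ^ l) z) * (τ ^ i) x) :=
      fun j _ => map_add _ _ _
    rw [Finset.sum_congr rfl e, Finset.sum_add_distrib]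
  have hNσWx : ∑ i ∈ range (p ^ n), (σ ^ i) (σ W * x)
      = ((∑ j ∈ range q, (σ ^ j) W) + z)
        + ∑ j ∈ range q, (σ ^ j) (∑ i ∈ range m, σ (∑ l ∈ range i, (τ ^ l) z) * (τ ^ i) x) := by
    rw [hcoset (σ W * x), htσWx]
    have e : ∀ j ∈ range q,
        (σ ^ j) (σ W + ∑ i ∈ range m, σ (∑ l ∈ range i, (τ ^ l) z) * (τ ^ i) x)
        = (σ ^ j) (σ W) + (σ ^ j) (∑ i ∈ range m, σ (∑ l ∈ range i, (τ ^ l) z) * (τ ^ i) x) :=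
      fun j _ => map_add _ _ _
    rw [Finset.sum_congr rfl e, Finset.sum_add_distrib, hσshift]
  have hSP : (∑ j ∈ range q, (σ ^ j) (∑ i ∈ range m, (∑ l ∈ range i, (τ ^ l) z) * (τ ^ i) x))
      - (∑ j ∈ range q, (σ ^ j) (∑ i ∈ range m, σ (∑ l ∈ range i, (τ ^ l) z) * (τ ^ i) x))
      = c * (∑ j ∈ range q, (σ ^ j) x)
        - c * (∑ j ∈ range q, (σ ^ j) (∑ i ∈ range m, (τ ^ i) (x * x))) := by
    rw [← Finset.sum_sub_distrib]
    have e : ∀ j ∈ range q,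
        (σ ^ j) (∑ i ∈ range m, (∑ l ∈ range i, (τ ^ l) z) * (τ ^ i) x)
          - (σ ^ j) (∑ i ∈ range m, σ (∑ l ∈ range i, (τ ^ l) z) * (τ ^ i) x)
        = c * ((σ ^ j) x) - c * ((σ ^ j) (∑ i ∈ range m, (τ ^ i) (x * x))) := by
      intro j _
      rw [← map_sub, hPP', map_sub, hσc]
      congr 1
      exact hσc _ _
    rw [Finset.sum_congr rfl e, Finset.sum_sub_distrib, ← Finset.mul_sum, ← Finset.mul_sum]
  rw [hNsplit, hNWx, hNσWx, hcoset (x * x)]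
  have hfinal : c * (∑ j ∈ range q, (σ ^ j) (∑ i ∈ range m, (τ ^ i) (x * x)))
      + (((∑ j ∈ range q, (σ ^ j) W)
          + ∑ j ∈ range q, (σ ^ j) (∑ i ∈ range m, (∑ l ∈ range i, (τ ^ l) z) * (τ ^ i) x))
        - (((∑ j ∈ range q, (σ ^ j) W) + z)
          + ∑ j ∈ range q, (σ ^ j) (∑ i ∈ range m, σ (∑ l ∈ range i, (τ ^ l) z) * (τ ^ i) x)))
      = c * (∑ j ∈ range q, (σ ^ j) (∑ i ∈ range m, (τ ^ i) (x * x)))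
        + ((∑ j ∈ range q, (σ ^ j) (∑ i ∈ range m, (∑ l ∈ range i, (τ ^ l) z) * (τ ^ i) x))
          - (∑ j ∈ range q, (σ ^ j) (∑ i ∈ range m, σ (∑ l ∈ range i, (τ ^ l) z) * (τ ^ i) x)))
          - z := by
    abel
  rw [hfinal, hSP, hz]
  abel
end

section
/- Let $p$ be prime, $n \geq 2$, $1 \leq k \leq n/2$, $\sigma$ a ring automorphism of order dividing $p^n$ of a ring $R$, and $x \in R$ with $N_U(x) := \sum_{i=0}^{p^{n-k}-1} \sigma^{ip^k}(x) = 1$. Define $z = p^{n-2k}\big(\sum_{j=0}^{p^k-1}\sigma^j\big)(x) - 1$, $w = \sum_{i=1}^{p^{n-k}-1}\big(\sum_{j=0}^{i-1}\sigma^{jp^k}\big)\big(x\,\sigma^{-ip^k}(z)\big)$, and $a = p^{n-2k}x + w - \sigma(w)$. Then $a$ is fixed by $\sigma^{p^k}$, i.e. $\sigma^{p^k}(a) = a$, and $\sum_{j=0}^{p^k-1}\sigma^j(a) = 1$. -/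
theorem a_invariant_and_quotient_norm_one (R : Type*) [Ring R] (p n k : ℕ) (hp : p.Prime)
    (hn : 2 ≤ n) (hk : 1 ≤ k) (hkn : 2 * k ≤ n)
    (σ : R ≃+* R) (hσ : σ ^ (p ^ n) = 1)
    (x : R) (hx : ∑ i ∈ Finset.range (p ^ (n - k)), (σ ^ (i * p ^ k)) x = 1)
    (z : R) (hz : z = (p : R) ^ (n - 2 * k) * (∑ j ∈ Finset.range (p ^ k), (σ ^ j) x) - 1)
    (w : R) (hw : w = ∑ i ∈ Finset.Icc 1 (p ^ (n - k) - 1), ∑ j ∈ Finset.range i,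
      (σ ^ (j * p ^ k)) (x * (σ⁻¹ ^ (i * p ^ k)) z))
    (a : R) (ha : a = (p : R) ^ (n - 2 * k) * x + (w - σ w)) :
    (σ ^ (p ^ k)) a = a ∧ ∑ j ∈ Finset.range (p ^ k), (σ ^ j) a = 1 := by
  set q := p ^ k with hq
  set m := p ^ (n - k) with hm
  have hm1 : 1 ≤ m := Nat.one_le_pow _ _ hp.pos
  have hmq : σ ^ (m * q) = 1 := by
    rw [hm, hq, ← pow_add, show n - k + k = n by omega]; exact hσ
  have happ : ∀ (a b : ℕ) (y : R), (σ ^ (a + b)) y = (σ ^ a) ((σ ^ b) y) := by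
    intro a b y; rw [pow_add]; rfl
  have hone : ∀ y : R, ((1 : R ≃+* R)) y = y := fun y => rfl
  have hcast : ∀ (t : ℕ) (e : ℕ) (y : R), (σ ^ t) ((p:R)^e * y) = (p:R)^e * (σ^t) y := by
    intro t e y; rw [map_mul, map_pow, map_natCast]
  -- telescoping helper
  have h2 : ∀ (f : ℕ → R) (i : ℕ), ∑ j ∈ Finset.range i, f (j+1)
      = ∑ j ∈ Finset.range i, f j + f i - f 0 := by
    intro f i
    rw [eq_sub_iff_add_eq, ← Finset.sum_range_succ' f i, Finset.sum_range_succ]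
  have hinv : ∀ i ∈ Finset.Icc 1 (m-1), (σ⁻¹ ^ (i*q)) z = (σ ^ ((m-i)*q)) z := by
    intro i hi
    simp only [Finset.mem_Icc] at hi
    have h1 : σ ^ ((m-i)*q) * σ ^ (i*q) = 1 := by
      rw [← pow_add, ← Nat.add_mul, Nat.sub_add_cancel (by omega)]; exact hmq
    rw [inv_pow, inv_eq_of_mul_eq_one_left h1]
  set S := ∑ j ∈ Finset.range q, (σ ^ j) x with hS
  have hNS : ∑ i ∈ Finset.range m, (σ ^ (i*q)) S = (q : R) := by
    have e1 : ∀ i ∈ Finset.range m, (σ ^ (i*q)) S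
        = ∑ j ∈ Finset.range q, (σ ^ j) ((σ ^ (i*q)) x) := by
      intro i _
      rw [hS, map_sum]
      refine Finset.sum_congr rfl fun j _ => ?_
      rw [← happ, ← happ, Nat.add_comm]
    rw [Finset.sum_congr rfl e1, Finset.sum_comm]
    have e2 : ∀ j ∈ Finset.range q, ∑ i ∈ Finset.range m, (σ ^ j) ((σ^(i*q)) x) = 1 := by
      intro j _
      rw [← map_sum, hx, map_one]
    rw [Finset.sum_congr rfl e2]
    simp
  have hσz : ∀ t : ℕ, (σ ^ t) z = (p:R)^(n-2*k) * (σ ^ t) S - 1 := by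
    intro t; rw [hz, map_sub, map_one, hcast]
  have hNz : ∑ i ∈ Finset.range m, (σ ^ (i*q)) z = 0 := by
    have e1 : ∑ i ∈ Finset.range m, (σ^(i*q)) z
        = (p:R)^(n-2*k) * ∑ i ∈ Finset.range m, (σ^(i*q)) S - (m:R) := by
      rw [Finset.sum_congr rfl fun i _ => hσz (i*q), Finset.sum_sub_distrib, ← Finset.mul_sum]
      simp
    have e2 : ((p:R))^(n-2*k) * (q:R) = (m:R) := by
      rw [hq, hm, Nat.cast_pow, Nat.cast_pow, ← pow_add, show n - 2*k + k = n - k by omega]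
    rw [e1, hNS, e2, sub_self]
  have hins : Finset.range m = insert 0 (Finset.Icc 1 (m-1)) := by
    ext i; simp only [Finset.mem_range, Finset.mem_insert, Finset.mem_Icc]; omega
  have hsplit : ∀ f : ℕ → R, ∑ i ∈ Finset.range m, f i = f 0 + ∑ i ∈ Finset.Icc 1 (m-1), f i := by
    intro f; rw [hins, Finset.sum_insert (by simp)]
  have hZneg : ∑ i ∈ Finset.Icc 1 (m-1), (σ⁻¹ ^ (i*q)) z = -z := by
    rw [Finset.sum_congr rfl hinv]
    have hbij : ∑ i ∈ Finset.Icc 1 (m-1), (σ ^ ((m-i)*q)) z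
        = ∑ i ∈ Finset.Icc 1 (m-1), (σ ^ (i*q)) z := by
      refine Finset.sum_nbij' (fun i => m - i) (fun i => m - i) ?_ ?_ ?_ ?_ ?_ <;>
        intro i hi <;> simp only [Finset.mem_Icc] at hi ⊢
      all_goals omega
    have := hsplit (fun i => (σ ^ (i*q)) z)
    rw [hNz] at this
    simp only [Nat.zero_mul, pow_zero, hone] at this
    rw [hbij]
    exact eq_neg_of_add_eq_zero_right this.symm
  have hxsum : ∑ i ∈ Finset.Icc 1 (m-1), (σ ^ (i*q)) x = 1 - x := by
    have h := hsplit (fun i => (σ ^ (i*q)) x)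
    rw [hx] at h
    simp only [Nat.zero_mul, pow_zero, hone] at h
    rw [eq_sub_iff_add_eq, add_comm, ← h]
  have hσqw : (σ ^ q) w = w + z := by
    have hterm : ∀ i ∈ Finset.Icc 1 (m-1),
        (σ ^ q) (∑ j ∈ Finset.range i, (σ ^ (j*q)) (x * (σ⁻¹ ^ (i*q)) z))
          = ∑ j ∈ Finset.range i, (σ ^ (j*q)) (x * (σ⁻¹ ^ (i*q)) z)
            + ((σ ^ (i*q)) x * z - x * (σ⁻¹ ^ (i*q)) z) := by
      intro i hi
      rw [map_sum]
      have h1 : ∀ j ∈ Finset.range i, (σ ^ q) ((σ ^ (j*q)) (x * (σ⁻¹ ^ (i*q)) z))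
          = (σ ^ ((j+1)*q)) (x * (σ⁻¹ ^ (i*q)) z) := by
        intro j _
        rw [← happ, show q + j*q = (j+1)*q by ring]
      rw [Finset.sum_congr rfl h1,
        h2 (fun j => (σ ^ (j*q)) (x * (σ⁻¹ ^ (i*q)) z)) i]
      have h3 : (σ ^ (i*q)) (x * (σ⁻¹ ^ (i*q)) z) = (σ ^ (i*q)) x * z := by
        rw [map_mul, inv_pow]
        congr 1
        exact (σ ^ (i*q)).apply_symm_apply z
      simp only [Nat.zero_mul, pow_zero, hone, h3]
      abel
    rw [hw, map_sum, Finset.sum_congr rfl hterm, Finset.sum_add_distrib, ← hw]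
    congr 1
    rw [Finset.sum_sub_distrib, ← Finset.sum_mul, ← Finset.mul_sum, hxsum, hZneg]
    have : z = (1 - x) * z - x * -z := by
      rw [sub_mul, one_mul, mul_neg]
      abel
    exact this.symm
  have hσS : σ S = S + (σ ^ q) x - x := by
    have e1 : σ S = ∑ j ∈ Finset.range q, (σ ^ (j+1)) x := by
      rw [hS, map_sum]
      refine Finset.sum_congr rfl fun j _ => ?_
      rw [pow_succ']
      rfl
    rw [e1, h2 (fun j => (σ ^ j) x) q]
    simp only [pow_zero, hone, ← hS]
  have hzσz : σ z = z - ((p:R)^(n-2*k) * x - (p:R)^(n-2*k) * ((σ ^ q) x)) := by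
    have e1 : σ z = (p:R)^(n-2*k) * (σ S) - 1 := by
      have := hσz 1
      rwa [pow_one] at this
    rw [e1, hσS, hz, mul_sub, mul_add]
    abel
  constructor
  · have hcomm : (σ ^ q) (σ w) = σ ((σ ^ q) w) := by
      rw [show (σ ^ q) (σ w) = (σ ^ (q+1)) w from by rw [pow_succ]; rfl,
        show σ ((σ ^ q) w) = (σ ^ (q+1)) w from by rw [pow_succ']; rfl]
    rw [ha, map_add, map_sub, hcast, hσqw, hcomm, hσqw, map_add, hzσz]
    abel
  · have hja : ∀ j ∈ Finset.range q, (σ ^ j) a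
        = (p:R)^(n-2*k) * (σ ^ j) x + ((σ ^ j) w - (σ ^ (j+1)) w) := by
      intro j _
      rw [ha, map_add, map_sub, hcast,
        show (σ ^ j) (σ w) = (σ ^ (j+1)) w from by rw [pow_succ]; rfl]
    rw [Finset.sum_congr rfl hja, Finset.sum_add_distrib, ← Finset.mul_sum, ← hS,
      Finset.sum_range_sub' (fun j => (σ ^ j) w) q, hσqw]
    have hcz : (p:R)^(n-2*k) * S = z + 1 := by
      rw [hz]; abel
    rw [hcz]
    simp only [pow_zero, hone]
    abel
end

section
/- Let $G$ be a finite group acting by ring automorphisms on a ring $R$, and $U \leq G$ a subgroup. Suppose $a \in R$ is fixed by every element of $U$, and let $T \subseteq G$ be a set of left coset representatives of $U$ in $G$ with $\sum_{t \in T} t(a) = 1$, and suppose $x \in R$ satisfies $\sum_{s \in U} s(x) = 1$. Then $\sum_{g \in G} g(a x) = 1$. -/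
theorem norm_of_product_coset_decomposition (R : Type*) [Ring R] (G : Type*) [Group G]
    [Fintype G] [MulSemiringAction G R] (U : Subgroup G) [Fintype U]
    (a : R) (haU : ∀ s : U, (s : G) • a = a)
    (T : Finset G) (hT : ∀ g : G, ∃! t, t ∈ T ∧ t⁻¹ * g ∈ U)
    (hTa : ∑ t ∈ T, t • a = 1)
    (x : R) (hx : ∑ s : U, (s : G) • x = 1) :
    ∑ g : G, g • (a * x) = 1 := by
  classical
  set e : T × U → G := fun p => (p.1 : G) * (p.2 : G) with he
  have hbij : Function.Bijective e := by
    constructor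
    · rintro ⟨⟨t1, ht1⟩, s1⟩ ⟨⟨t2, ht2⟩, s2⟩ h
      simp only [he] at h
      obtain ⟨t, -, huniq⟩ := hT (t1 * s1)
      have h1 : t1 = t := huniq t1 ⟨ht1, by simp⟩
      have h2 : t2 = t := huniq t2 ⟨ht2, by rw [h]; simp⟩
      have ht12 : t1 = t2 := h1.trans h2.symm
      subst ht12
      have : (s1 : G) = s2 := mul_left_cancel h
      simp [Subtype.ext (this : (s1 : G) = s2)]
    · intro g
      obtain ⟨t, ⟨htT, htU⟩, -⟩ := hT g
      exact ⟨⟨⟨t, htT⟩, ⟨t⁻¹ * g, htU⟩⟩, by simp [he]⟩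
  have := (Fintype.sum_bijective e hbij (fun p => e p • (a * x))
    (fun g => g • (a * x)) (fun p => rfl)).symm
  rw [this, Fintype.sum_prod_type]
  have : ∀ t : T, ∑ s : U, e (t, s) • (a * x) = (t : G) • a := by
    intro t
    have : ∀ s : U, e (t, s) • (a * x) = (t : G) • (a * (s : G) • x) := by
      intro s
      simp only [he, mul_smul, smul_mul', haU s]
    rw [Fintype.sum_congr _ _ this, ← Finset.smul_sum, ← Finset.mul_sum, hx, mul_one]
  rw [Fintype.sum_congr _ _ this, Finset.sum_coe_sort T (fun t => t • a), hTa]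
end

section
/- Let $p$ be an odd prime, $\sigma$ a ring automorphism of order dividing $p^2$ of a ring $R$, and $x \in R$ with $\sum_{j=0}^{p-1}\sigma^{jp}(x) = 1$. Then the element $z = \big(\sum_{j=0}^{p-1}\sigma^j\big)(x) - 1$ satisfies $\sum_{j=0}^{p-1}\sigma^{jp}(z) = 0$, and there exists $w \in R$ with $\big(\sum_{j=0}^{p-1}\sigma^j\big)(x) - 1 = \sigma^p(w) - w$. -/
theorem z_is_coboundary_p_squared (R : Type*) [Ring R] (p : ℕ) (hp : p.Prime) (hodd : Odd p)
    (σ : R ≃+* R) (hσ : σ ^ (p ^ 2) = 1)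
    (x : R) (hx : ∑ j ∈ Finset.range p, (σ ^ (j * p)) x = 1)
    (z : R) (hz : z = (∑ j ∈ Finset.range p, (σ ^ j) x) - 1) :
    (∑ j ∈ Finset.range p, (σ ^ (j * p)) z = 0) ∧ ∃ w : R, z = (σ ^ p) w - w := by
  have hcomp : ∀ (a b : ℕ) (y : R), (σ ^ a) ((σ ^ b) y) = (σ ^ (a + b)) y := by
    intro a b y; rw [pow_add]; rfl
  have hτσ : ∀ j, σ ^ (j * p) = (σ ^ p) ^ j := fun j => by rw [← pow_mul, mul_comm]
  have hN : ∑ j ∈ Finset.range p, ((σ ^ p) ^ j) x = 1 := by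
    rw [← hx]; exact Finset.sum_congr rfl fun j _ => by rw [hτσ]
  have hperiod : ∀ y : R, ((σ ^ p) ^ p) y = y := by
    intro y; rw [← pow_mul, ← sq, hσ]; rfl
  have hswap : ∀ i j, ((σ ^ p) ^ j) ((σ ^ i) x) = (σ ^ i) (((σ ^ p) ^ j) x) := by
    intro i j; rw [← pow_mul, hcomp, hcomp, add_comm]
  -- Part 1: the norm of z vanishes
  have hNz : ∑ j ∈ Finset.range p, ((σ ^ p) ^ j) z = 0 := by
    have h1 : ∀ j, ((σ ^ p) ^ j) z
        = (∑ i ∈ Finset.range p, (σ ^ i) (((σ ^ p) ^ j) x)) - 1 := by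
      intro j
      rw [hz, map_sub, map_one, map_sum]
      exact congrArg (· - 1) (Finset.sum_congr rfl fun i _ => hswap i j)
    calc ∑ j ∈ Finset.range p, ((σ ^ p) ^ j) z
        = (∑ j ∈ Finset.range p, ∑ i ∈ Finset.range p, (σ ^ i) (((σ ^ p) ^ j) x))
            - ∑ _j ∈ Finset.range p, (1 : R) := by
          rw [← Finset.sum_sub_distrib]
          exact Finset.sum_congr rfl fun j _ => h1 j
      _ = (∑ i ∈ Finset.range p, (σ ^ i) (∑ j ∈ Finset.range p, ((σ ^ p) ^ j) x))
            - ∑ _j ∈ Finset.range p, (1 : R) := by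
          rw [Finset.sum_comm]
          congr 1
          exact Finset.sum_congr rfl fun i _ => (map_sum (σ ^ i) _ _).symm
      _ = 0 := by rw [hN]; simp
  refine ⟨by rw [← hNz]; exact Finset.sum_congr rfl fun j _ => by rw [hτσ], ?_⟩
  -- Part 2: z is a coboundary
  set τ : R ≃+* R := σ ^ p with hτ
  have hcompτ : ∀ (a b : ℕ) (y : R), (τ ^ a) ((τ ^ b) y) = (τ ^ (a + b)) y := by
    intro a b y; rw [pow_add]; rfl
  have hτ1 : ∀ y : R, τ y = (τ ^ 1) y := fun y => by rw [pow_one]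
  set s : ℕ → R := fun j => ∑ i ∈ Finset.range j, (τ ^ i) z with hs
  have hs0 : s 0 = 0 := by simp [hs]
  have hsp : s p = 0 := hNz
  have hstep : ∀ j, τ (s j) = s (j + 1) - z := by
    intro j
    have h1 : τ (s j) = ∑ i ∈ Finset.range j, (τ ^ (i + 1)) z := by
      rw [hs, map_sum]
      exact Finset.sum_congr rfl fun i _ => by
        rw [hτ1, hcompτ, add_comm]
    have h2 : s (j + 1) = (∑ i ∈ Finset.range j, (τ ^ (i + 1)) z) + z := by
      rw [hs]
      have := Finset.sum_range_succ' (fun i => (τ ^ i) z) j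
      simpa using this
    rw [h1, h2]; abel
  have hA : ∑ j ∈ Finset.range p, s (j + 1) * (τ ^ (j + 1)) x
      = ∑ j ∈ Finset.range p, s j * (τ ^ j) x := by
    have h := Finset.sum_range_succ' (fun j => s j * (τ ^ j) x) p
    rw [Finset.sum_range_succ] at h
    simp only [hsp, hs0, zero_mul, add_zero] at h
    exact h.symm
  have hB : ∑ j ∈ Finset.range p, (τ ^ (j + 1)) x = 1 := by
    have h := Finset.sum_range_succ' (fun j => (τ ^ j) x) p
    rw [Finset.sum_range_succ, hN, hperiod] at h
    simp only [pow_zero] at h; norm_num at h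
    norm_num; exact h.symm
  refine ⟨-(∑ j ∈ Finset.range p, s j * (τ ^ j) x), ?_⟩
  have hτw : τ (-(∑ j ∈ Finset.range p, s j * (τ ^ j) x))
      = -(∑ j ∈ Finset.range p, (s (j + 1) - z) * (τ ^ (j + 1)) x) := by
    rw [map_neg, map_sum]
    congr 1
    refine Finset.sum_congr rfl fun j _ => ?_
    rw [map_mul, hstep, hτ1 ((τ ^ j) x), hcompτ, add_comm]
  rw [hτw]
  have hsum : ∑ j ∈ Finset.range p, (s (j + 1) - z) * (τ ^ (j + 1)) x
      = (∑ j ∈ Finset.range p, s j * (τ ^ j) x) - z := by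
    calc ∑ j ∈ Finset.range p, (s (j + 1) - z) * (τ ^ (j + 1)) x
        = (∑ j ∈ Finset.range p, s (j + 1) * (τ ^ (j + 1)) x)
            - ∑ j ∈ Finset.range p, z * (τ ^ (j + 1)) x := by
          rw [← Finset.sum_sub_distrib]
          exact Finset.sum_congr rfl fun j _ => by rw [sub_mul]
      _ = (∑ j ∈ Finset.range p, s j * (τ ^ j) x) - z := by
          rw [hA, ← Finset.mul_sum, hB, mul_one]
  rw [hsum]
  abel
end

section
/- Let $p$ be prime, $n \ge 2$, $1 \le k \le n/2$, and $\sigma$ a ring automorphism of order dividing $p^n$ of a ring $R$ with $x \in R$ satisfying $\sum_{i=0}^{p^{n-k}-1}\sigma^{ip^k}(x) = 1$. Define $\psi : \{0, 1, \dots, p^n - 1\} \to R$ by $\psi(0) = 0$ and $\psi(i) = \psi(i-1) - \varepsilon(i-1) + p^{n-2k}\sigma^{i-1}(x)$, where $\varepsilon(j) = 1$ if $p^k \mid j$ and $0$ otherwise. Then for every $i$ with $0 \le i < p^n - p^k$, the difference $\psi(i + p^k) - \psi(i)$ equals $\sigma^i(z)$, where $z = p^{n-2k}\big(\sum_{j=0}^{p^k-1}\sigma^j\big)(x)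 - 1$. -/
/-
Write `c = p^(n-2k)` and `m = p^k`. The recursion says that each step `j → j + 1` adds
`c σ^j(x)` and subtracts `1` exactly when `m ∣ j`. A window of `m` consecutive steps contains
exactly one multiple of `m`, so telescoping gives
`ψ(i + m) - ψ(i) = c ∑_{j=i}^{i+m-1} σ^j(x) - 1 = σ^i(z)`.
-/

open Finset

theorem Nat.card_filter_dvd_Ico_add (i : ℕ) {m : ℕ} (hm : 0 < m) :
    #{j ∈ Ico i (i + m) | m ∣ j} = 1 := by
  rw [Nat.filter_Ico_card_eq_of_periodic i m _ (fun j ↦ by simp), Nat.count_eq_card_filter_range,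
    card_eq_one]
  refine ⟨0, eq_singleton_iff_unique_mem.mpr ⟨by simp [hm], fun j hj ↦ ?_⟩⟩
  simp only [mem_filter, mem_range] at hj
  exact Nat.eq_zero_of_dvd_of_lt hj.2 hj.1

theorem sub_eq_sum_Ico_sub_one_of_forall_succ_eq {G : Type*} [AddCommGroupWithOne G]
    {ψ y : ℕ → G} {i m : ℕ} (hm : 0 < m)
    (hstep : ∀ j ∈ Ico i (i + m), ψ (j + 1) = ψ j - (if m ∣ j then 1 else 0) + y j) :
    ψ (i + m) - ψ i = ∑ j ∈ Ico i (i + m), y j - 1 := by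
  have hsteps : ∑ j ∈ Ico i (i + m), (ψ (j + 1) - ψ j)
      = ∑ j ∈ Ico i (i + m), y j - ∑ j ∈ Ico i (i + m), (if m ∣ j then (1 : G) else 0) := by
    rw [← sum_sub_distrib]
    refine sum_congr rfl fun j hj ↦ ?_
    rw [hstep j hj]
    abel
  rw [← sum_Ico_sub (f := ψ) (by omega), hsteps, sum_boole, Nat.card_filter_dvd_Ico_add i hm,
    Nat.cast_one]

theorem RingEquiv.sum_Ico_pow_apply {R : Type*} [Semiring R] (σ : R ≃+* R) (x : R) (i m : ℕ) :
    ∑ j ∈ Ico i (i + m), (σ ^ j) x = (σ ^ i) (∑ j ∈ range m, (σ ^ j) x) := by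
  rw [sum_Ico_eq_sum_range, Nat.add_sub_cancel_left, map_sum]
  simp only [pow_add]
  rfl

theorem psi_difference_general (R : Type*) [Ring R] (p n k : ℕ) (hp : p.Prime)
    (σ : R ≃+* R)
    (x : R)
    (ψ : ℕ → R)
    (hψ : ∀ i, 1 ≤ i → i ≤ p ^ n - 1 →
      ψ i = ψ (i - 1) - (if p ^ k ∣ (i - 1) then 1 else 0)
        + (p : R) ^ (n - 2 * k) * (σ ^ (i - 1)) x)
    (z : R) (hz : z = (p : R) ^ (n - 2 * k) * (∑ j ∈ Finset.range (p ^ k), (σ ^ j) x) - 1) :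
    ∀ i, i < p ^ n - p ^ k → ψ (i + p ^ k) - ψ i = (σ ^ i) z := by
  intro i hi
  have hstep : ∀ j ∈ Ico i (i + p ^ k), ψ (j + 1)
      = ψ j - (if p ^ k ∣ j then 1 else 0) + (p : R) ^ (n - 2 * k) * (σ ^ j) x := by
    intro j hj
    simpa using hψ (j + 1) (by omega) (by simp only [mem_Ico] at hj; omega)
  rw [sub_eq_sum_Ico_sub_one_of_forall_succ_eq (pow_pos hp.pos k) hstep, ← mul_sum,
    RingEquiv.sum_Ico_pow_apply, hz, map_sub, map_one, map_mul, map_pow, map_natCast]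

theorem psi_difference (R : Type*) [Ring R] (p n k : ℕ) (hp : p.Prime)
    (hn : 2 ≤ n) (hk : 1 ≤ k) (hkn : 2 * k ≤ n)
    (σ : R ≃+* R) (hσ : σ ^ (p ^ n) = 1)
    (x : R) (hx : ∑ i ∈ Finset.range (p ^ (n - k)), (σ ^ (i * p ^ k)) x = 1)
    (ψ : ℕ → R) (hψ0 : ψ 0 = 0)
    (hψ : ∀ i, 1 ≤ i → i ≤ p ^ n - 1 →
      ψ i = ψ (i - 1) - (if p ^ k ∣ (i - 1) then 1 else 0)
        + (p : R) ^ (n - 2 * k) * (σ ^ (i - 1)) x)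
    (z : R) (hz : z = (p : R) ^ (n - 2 * k) * (∑ j ∈ Finset.range (p ^ k), (σ ^ j) x) - 1) :
    ∀ i, i < p ^ n - p ^ k → ψ (i + p ^ k) - ψ i = (σ ^ i) z :=
  psi_difference_general R p n k hp σ x ψ hψ z hz
end
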